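/- arXiv:2509.02104 — 2 statements merged into one kernel-verified Lean document; each statement's English description precedes it below -/
import Mathlib

section
/- Let a > 0, b > 0, c > 0, and let (ρ_n) be a sequence of complex numbers with |Im ρ_n| ≤ c for all n such that the exponentials (exp(i ρ_n x)) form a Riesz basis in L²(-a,a). Then there exists a constant C > 0 such that for every f ∈ L²(-b,b), the sum over n of |∫_{-b}^{b} f(x) exp(i ρ_n x) dx|² is at most C ∫_{-b}^{b} |f(x)|² dx. -/
/-!
On `(-a, a)` the Bessel bound is the Riesz basis property: `⟪h, T (B n)⟫ = ⟪T† h, B n⟫`, so by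
Parseval the sum of squares is `‖T† h‖² ≤ ‖T‖² ‖h‖²`. Translating the interval by `t` multiplies
the `n`-th coefficient by `exp (-i ρ_n t)`, of modulus at most `exp (c |t|)`, so the bound holds on
every translate of `(-a, a)` with a constant depending only on `t`. It passes to subsets and to
finite unions, and by compactness `[-b, b]` is covered by finitely many translates.
-/

open MeasureTheory Complex ComplexConjugate Set Bornology
open scoped InnerProductSpace

theorem HilbertBasis.hasSum_norm_inner_apply_sq {ι 𝕜 H K : Type*} [RCLike 𝕜]
    [NormedAddCommGroup H] [InnerProductSpace 𝕜 H] [CompleteSpace H] [NormedAddCommGroup K]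
    [InnerProductSpace 𝕜 K] [CompleteSpace K] (B : HilbertBasis ι 𝕜 H) (T : H →L[𝕜] K) (x : K) :
    HasSum (fun i => ‖⟪x, T (B i)⟫_𝕜‖ ^ 2) (‖T.adjoint x‖ ^ 2) := by
  have h := lp.hasSum_norm (p := 2) (by norm_num) (B.repr (T.adjoint x))
  simp only [ENNReal.toReal_ofNat, Real.rpow_ofNat, LinearIsometryEquiv.norm_map,
    B.repr_apply_apply] at h
  convert h using 2 with i
  rw [← ContinuousLinearMap.adjoint_inner_left, norm_inner_symm]

namespace MeasureTheory.L2

variable {α 𝕜 : Type*} [MeasurableSpace α] {μ : Measure α} [RCLike 𝕜]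

theorem inner_toLp_left {f : α → 𝕜} (hf : MemLp f 2 μ) (g : Lp 𝕜 2 μ) :
    ⟪hf.toLp f, g⟫_𝕜 = ∫ x, conj (f x) * g x ∂μ := by
  rw [inner_def]
  refine integral_congr_ae ?_
  filter_upwards [hf.coeFn_toLp] with x hx
  rw [hx, RCLike.inner_apply, mul_comm]

theorem norm_toLp_sq {f : α → 𝕜} (hf : MemLp f 2 μ) :
    ‖hf.toLp f‖ ^ 2 = ∫ x, ‖f x‖ ^ 2 ∂μ := by
  rw [← inner_self_eq_norm_sq (𝕜 := 𝕜), inner_def, ← integral_re (integrable_inner _ _)]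
  refine integral_congr_ae ?_
  filter_upwards [hf.coeFn_toLp] with x hx
  rw [inner_self_eq_norm_sq, hx]

end MeasureTheory.L2

theorem summable_and_tsum_le_mul_of_le {ι : Type*} {u v : ι → ℝ} {K : ℝ} (hu : ∀ i, 0 ≤ u i)
    (huv : ∀ i, u i ≤ K * v i) (hv : Summable v) :
    Summable u ∧ ∑' i, u i ≤ K * ∑' i, v i := by
  have hu' := (hv.mul_left K).of_nonneg_of_le hu huv
  refine ⟨hu', ?_⟩
  rw [← tsum_mul_left]
  exact hu'.tsum_le_tsum huv (hv.mul_left K)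

theorem summable_and_tsum_norm_add_sq_le {ι E : Type*} [SeminormedAddCommGroup E]
    {u v : ι → E} (hu : Summable fun i => ‖u i‖ ^ 2) (hv : Summable fun i => ‖v i‖ ^ 2) :
    (Summable fun i => ‖u i + v i‖ ^ 2) ∧
      ∑' i, ‖u i + v i‖ ^ 2 ≤ 2 * (∑' i, ‖u i‖ ^ 2 + ∑' i, ‖v i‖ ^ 2) := by
  have hle : ∀ i, ‖u i + v i‖ ^ 2 ≤ 2 * (‖u i‖ ^ 2 + ‖v i‖ ^ 2) := fun i => by
    nlinarith [norm_add_le (u i) (v i), norm_nonneg (u i + v i), sq_nonneg (‖u i‖ - ‖v i‖)]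
  rw [← hu.tsum_add hv]
  exact summable_and_tsum_le_mul_of_le (fun _ => by positivity) hle (hu.add hv)

theorem integrableOn_mul_of_memLp_of_continuous {s : Set ℝ} (hs : MeasurableSet s)
    (hsb : IsBounded s) {f g : ℝ → ℂ} (hf : MemLp f 2 (volume.restrict s))
    (hg : Continuous g) :
    IntegrableOn (fun x => f x * g x) s := by
  have : IsFiniteMeasure (volume.restrict s) :=
    isFiniteMeasure_restrict.2 hsb.measure_lt_top.ne
  exact IntegrableOn.mul_continuousOn_of_subset (hf.integrable one_le_two) hg.continuousOn hs
    hsb.isCompact_closure subset_closure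

theorem norm_exp_I_mul_ofReal_le {z : ℂ} {c : ℝ} (hz : |z.im| ≤ c) (t : ℝ) :
    ‖exp (I * z * t)‖ ≤ Real.exp (c * |t|) := by
  rw [norm_exp, Real.exp_le_exp]
  calc (I * z * t).re = -(z.im * t) := by simp
    _ ≤ |z.im| * |t| := by rw [← abs_mul]; exact neg_le_abs _
    _ ≤ c * |t| := by gcongr

def BesselOn (e : ℕ → ℝ → ℂ) (s : Set ℝ) : Prop :=
  ∃ C > 0, ∀ f : ℝ → ℂ, MemLp f 2 (volume.restrict s) →
    Summable (fun n => ‖∫ x in s, f x * e n x‖ ^ 2) ∧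
      ∑' n, ‖∫ x in s, f x * e n x‖ ^ 2 ≤ C * ∫ x in s, ‖f x‖ ^ 2

namespace BesselOn

variable {e : ℕ → ℝ → ℂ}

theorem of_eq_apply_hilbertBasis {H : Type*} [NormedAddCommGroup H] [InnerProductSpace ℂ H]
    [CompleteSpace H] {s : Set ℝ} (E : ℕ → Lp ℂ 2 (volume.restrict s))
    (hE : ∀ n, E n =ᵐ[volume.restrict s] e n) (B : HilbertBasis ℕ ℂ H)
    (T : H →L[ℂ] Lp ℂ 2 (volume.restrict s)) (hT : ∀ n, E n = T (B n)) :
    BesselOn e s := by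
  refine ⟨‖T‖ ^ 2 + 1, by positivity, fun f hf => ?_⟩
  -- The L² inner product is conjugate-linear in its first argument, hence `star f`.
  set h := hf.star.toLp (star f)
  have hinner : ∀ n, ⟪h, E n⟫_ℂ = ∫ x in s, f x * e n x := by
    intro n
    rw [L2.inner_toLp_left]
    refine integral_congr_ae ?_
    filter_upwards [hE n] with x hx
    simp [hx]
  have hnorm : ‖h‖ ^ 2 = ∫ x in s, ‖f x‖ ^ 2 := by
    rw [L2.norm_toLp_sq]
    simp
  have hsum := B.hasSum_norm_inner_apply_sq T h
  simp only [← hT, hinner] at hsum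
  refine ⟨hsum.summable, ?_⟩
  have hadj : ‖T.adjoint h‖ ≤ ‖T‖ * ‖h‖ := by
    simpa using T.adjoint.le_opNorm h
  rw [hsum.tsum_eq, ← hnorm]
  nlinarith [norm_nonneg (T.adjoint h), norm_nonneg h, norm_nonneg T]

theorem empty : BesselOn e ∅ :=
  ⟨1, one_pos, fun f _ => by simp⟩

theorem mono {s t : Set ℝ} (h : BesselOn e s) (hts : t ⊆ s) (ht : MeasurableSet t) :
    BesselOn e t := by
  obtain ⟨C, hC, hs⟩ := h
  refine ⟨C, hC, fun f hf => ?_⟩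
  have hrestrict {E : Type} [NormedAddCommGroup E] [NormedSpace ℝ E] (F : ℝ → E) :
      ∫ x in s, t.indicator F x = ∫ x in t, F x := by
    rw [setIntegral_indicator ht, inter_eq_right.2 hts]
  have hint : ∀ n, ∫ x in s, t.indicator f x * e n x = ∫ x in t, f x * e n x := fun n => by
    simp_rw [← indicator_mul_left]
    exact hrestrict _
  have hnorm : ∫ x in s, ‖t.indicator f x‖ ^ 2 = ∫ x in t, ‖f x‖ ^ 2 := by
    rw [← hrestrict]
    congr 1 with x
    by_cases hx : x ∈ t <;> simp [hx]
  simpa only [hint, hnorm] using hs _ (((memLp_indicator_iff_restrict ht).2 hf).restrict s)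

theorem union (he : ∀ n, Continuous (e n)) {s t : Set ℝ} (hs : BesselOn e s)
    (ht : BesselOn e t) (hsm : MeasurableSet s) (htm : MeasurableSet t)
    (hb : IsBounded (s ∪ t)) : BesselOn e (s ∪ t) := by
  obtain ⟨C₁, hC₁, h₁⟩ := hs
  obtain ⟨C₂, hC₂, h₂⟩ := ht.mono sdiff_subset (htm.diff hsm)
  rw [← union_sdiff_self] at hb ⊢
  refine ⟨2 * (C₁ + C₂), by positivity, fun f hf => ?_⟩
  have hsplit {E : Type} [NormedAddCommGroup E] [NormedSpace ℝ E] {F : ℝ → E}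
      (hF : IntegrableOn F (s ∪ t \ s)) :
      ∫ x in s ∪ t \ s, F x = (∫ x in s, F x) + ∫ x in t \ s, F x :=
    setIntegral_union disjoint_sdiff_right (htm.diff hsm) hF.left_of_union hF.right_of_union
  obtain ⟨hsum₁, hle₁⟩ :=
    h₁ f (hf.mono_measure (Measure.restrict_mono_set _ subset_union_left))
  obtain ⟨hsum₂, hle₂⟩ :=
    h₂ f (hf.mono_measure (Measure.restrict_mono_set _ subset_union_right))
  obtain ⟨hsum, hle⟩ := summable_and_tsum_norm_add_sq_le hsum₁ hsum₂
  have hint : ∀ n, IntegrableOn (fun x => f x * e n x) (s ∪ t \ s) := fun n =>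
    integrableOn_mul_of_memLp_of_continuous (hsm.union (htm.diff hsm)) hb hf (he n)
  simp only [hsplit (hint _), hsplit (hf.integrable_norm_pow two_ne_zero)]
  refine ⟨hsum, hle.trans ?_⟩
  have hA : 0 ≤ ∫ x in s, ‖f x‖ ^ 2 := setIntegral_nonneg hsm fun _ _ => by positivity
  have hB : 0 ≤ ∫ x in t \ s, ‖f x‖ ^ 2 :=
    setIntegral_nonneg (htm.diff hsm) fun _ _ => by positivity
  nlinarith

theorem biUnion_finset {ι : Type*} (he : ∀ n, Continuous (e n)) (F : Finset ι)
    {U : ι → Set ℝ} (hU : ∀ i, BesselOn e (U i)) (hm : ∀ i, MeasurableSet (U i))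
    (hb : ∀ i, IsBounded (U i)) :
    BesselOn e (⋃ i ∈ F, U i) := by
  classical
  induction F using Finset.induction_on with
  | empty => simpa using empty
  | insert i F _ ih =>
    rw [Finset.set_biUnion_insert]
    exact (hU i).union he ih (hm i) (F.measurableSet_biUnion fun j _ => hm j)
      ((hb i).union ((isBounded_biUnion_finset F).2 fun j _ => hb j))

theorem exp_preimage_add_const {ρ : ℕ → ℂ} {c : ℝ} (hIm : ∀ n, |(ρ n).im| ≤ c)
    {s : Set ℝ} (h : BesselOn (fun n x => exp (I * ρ n * x)) s) (t : ℝ) :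
    BesselOn (fun n x => exp (I * ρ n * x)) ((· + t) ⁻¹' s) := by
  obtain ⟨C, hC, hs⟩ := h
  refine ⟨Real.exp (c * |t|) ^ 2 * C, by positivity, fun f hf => ?_⟩
  have hτ := measurePreserving_add_right volume t
  have hchange {E : Type} [NormedAddCommGroup E] [NormedSpace ℝ E] (F : ℝ → E) :
      ∫ x in (· + t) ⁻¹' s, F (x + t) = ∫ y in s, F y :=
    hτ.setIntegral_preimage_emb (measurableEmbedding_addRight t) F s
  set g : ℝ → ℂ := fun y => f (y - t)
  have hg : MemLp g 2 (volume.restrict s) := by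
    rw [← (hτ.restrict_preimage_emb (measurableEmbedding_addRight t) s).map_eq,
      (measurableEmbedding_addRight t).memLp_map_measure_iff]
    simpa [g, Function.comp_def] using hf
  have hint : ∀ n, ∫ x in (· + t) ⁻¹' s, f x * exp (I * ρ n * x) =
      exp (I * ρ n * (-t : ℝ)) * ∫ y in s, g y * exp (I * ρ n * y) := by
    intro n
    rw [← integral_const_mul, ← hchange]
    congr 1 with x
    simp only [g, add_sub_cancel_right]
    rw [mul_left_comm, ← exp_add]
    push_cast
    ring_nf
  have hnorm : ∫ x in (· + t) ⁻¹' s, ‖f x‖ ^ 2 = ∫ y in s, ‖g y‖ ^ 2 := by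
    rw [← hchange]
    simp only [g, add_sub_cancel_right]
  obtain ⟨hsum, hle⟩ := hs g hg
  have hbound : ∀ n, ‖∫ x in (· + t) ⁻¹' s, f x * exp (I * ρ n * x)‖ ^ 2 ≤
      Real.exp (c * |t|) ^ 2 * ‖∫ y in s, g y * exp (I * ρ n * y)‖ ^ 2 := by
    intro n
    rw [hint, norm_mul, mul_pow]
    gcongr
    simpa only [abs_neg] using norm_exp_I_mul_ofReal_le (hIm n) (-t)
  obtain ⟨hsum', hle'⟩ := summable_and_tsum_le_mul_of_le (fun _ => by positivity) hbound hsum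
  refine ⟨hsum', hle'.trans ?_⟩
  rw [hnorm, mul_assoc]
  gcongr

end BesselOn

theorem exp_riesz_basis_bessel_on_larger_interval_general
    (a b c : ℝ) (ha : 0 < a)
    (ρ : ℕ → ℂ) (hIm : ∀ n, |(ρ n).im| ≤ c)
    (E : ℕ → Lp ℂ 2 (volume.restrict (Set.Ioo (-a) a)))
    (hE : ∀ n, (E n : ℝ → ℂ) =ᵐ[volume.restrict (Set.Ioo (-a) a)]
      fun x => Complex.exp (Complex.I * ρ n * (x : ℂ)))
    (hRiesz : ∃ (B : HilbertBasis ℕ ℂ (Lp ℂ 2 (volume.restrict (Set.Ioo (-a) a))))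
      (T : Lp ℂ 2 (volume.restrict (Set.Ioo (-a) a)) ≃L[ℂ]
        Lp ℂ 2 (volume.restrict (Set.Ioo (-a) a))),
      ∀ n, E n = T (B n)) :
    ∃ C > 0, ∀ f : ℝ → ℂ, MemLp f 2 (volume.restrict (Set.Ioo (-b) b)) →
      Summable (fun n : ℕ =>
        ‖∫ x in Set.Ioo (-b) b, f x * Complex.exp (Complex.I * ρ n * (x : ℂ))‖ ^ 2) ∧
      ∑' n : ℕ, ‖∫ x in Set.Ioo (-b) b, f x * Complex.exp (Complex.I * ρ n * (x : ℂ))‖ ^ 2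
        ≤ C * ∫ x in Set.Ioo (-b) b, ‖f x‖ ^ 2 := by
  obtain ⟨B, T, hT⟩ := hRiesz
  have hbase : BesselOn (fun n x => exp (I * ρ n * x)) (Ioo (-a) a) :=
    .of_eq_apply_hilbertBasis E hE B T hT
  set U : ℝ → Set ℝ := fun t => (· + t) ⁻¹' Ioo (-a) a
  obtain ⟨F, hF⟩ := (isCompact_Icc (a := -b) (b := b)).elim_finite_subcover U
    (fun t => isOpen_Ioo.preimage (continuous_add_const t))
    (fun x _ => mem_iUnion.2 ⟨-x, by simp [U, ha]⟩)
  have hcover : BesselOn (fun n x => exp (I * ρ n * x)) (⋃ t ∈ F, U t) :=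
    .biUnion_finset (fun n => by fun_prop) F (hbase.exp_preimage_add_const hIm)
      (fun t => measurableSet_Ioo.preimage (measurable_add_const t))
      (fun t => by simp [U, Metric.isBounded_Ioo])
  exact hcover.mono (Ioo_subset_Icc_self.trans hF) measurableSet_Ioo

/-- Bessel-type inequality on `(-b,b)` for a family of exponentials
`exp(i ρ_n x)` that forms a Riesz basis of `L²(-a,a)` (i.e., the image of a Hilbert
(orthonormal) basis under a bounded invertible operator) and whose frequencies have
uniformly bounded imaginary parts. -/
theorem exp_riesz_basis_bessel_on_larger_interval
    (a b c : ℝ) (ha : 0 < a) (hb : 0 < b) (hc : 0 < c)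
    (ρ : ℕ → ℂ) (hIm : ∀ n, |(ρ n).im| ≤ c)
    (E : ℕ → Lp ℂ 2 (volume.restrict (Set.Ioo (-a) a)))
    (hE : ∀ n, (E n : ℝ → ℂ) =ᵐ[volume.restrict (Set.Ioo (-a) a)]
      fun x => Complex.exp (Complex.I * ρ n * (x : ℂ)))
    (hRiesz : ∃ (B : HilbertBasis ℕ ℂ (Lp ℂ 2 (volume.restrict (Set.Ioo (-a) a))))
      (T : Lp ℂ 2 (volume.restrict (Set.Ioo (-a) a)) ≃L[ℂ]
        Lp ℂ 2 (volume.restrict (Set.Ioo (-a) a))),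
      ∀ n, E n = T (B n)) :
    ∃ C > 0, ∀ f : ℝ → ℂ, MemLp f 2 (volume.restrict (Set.Ioo (-b) b)) →
      Summable (fun n : ℕ =>
        ‖∫ x in Set.Ioo (-b) b, f x * Complex.exp (Complex.I * ρ n * (x : ℂ))‖ ^ 2) ∧
      ∑' n : ℕ, ‖∫ x in Set.Ioo (-b) b, f x * Complex.exp (Complex.I * ρ n * (x : ℂ))‖ ^ 2
        ≤ C * ∫ x in Set.Ioo (-b) b, ‖f x‖ ^ 2 :=
  exp_riesz_basis_bessel_on_larger_interval_general a b c ha ρ hIm E hE hRiesz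
end

section
/- Fix α > 0 and ν_n = πn + iα, n ∈ ℤ. There exist constants c, C > 0 such that for every f ∈ L²(-1,1), c ‖f‖_{L²(-1,1)} ≤ ‖( ∫_{-1}^{1} f(t) exp(i ν_n t) dt )_{n∈ℤ}‖_{ℓ²} ≤ C ‖f‖_{L²(-1,1)}. -/
/-!
Since `exp (i ν_n t) = exp (-α t) exp (i π n t)`, the coefficients of `f` are, up to the factor
`2`, the Fourier coefficients of `g = exp (-α t) f` on the circle of length `2`, so by Parseval
their squared `ℓ²` norm is `2 ‖g‖²`. On `(-1, 1)` the weight `exp (-α t)` lies between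
`exp (-|α|)` and `exp |α|`, which makes `‖g‖` comparable to `‖f‖`.
-/

open MeasureTheory Complex Set
open scoped Real

lemma mul_sqrt_le_sqrt_of_sq_mul_le {k x y : ℝ} (hk : 0 ≤ k) (h : k ^ 2 * x ≤ y) :
    k * √x ≤ √y := by
  rw [← Real.sqrt_sq hk, ← Real.sqrt_mul (sq_nonneg k)]
  exact Real.sqrt_le_sqrt h

lemma sqrt_le_mul_sqrt_of_le_sq_mul {k x y : ℝ} (hk : 0 ≤ k) (h : x ≤ k ^ 2 * y) :
    √x ≤ k * √y := by
  rw [← Real.sqrt_sq hk, ← Real.sqrt_mul (sq_nonneg k)]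
  exact Real.sqrt_le_sqrt h

section BoundedWeight

variable {X : Type*} [MeasurableSpace X] {μ : Measure X} {w f : X → ℂ} {m M : ℝ}

lemma integral_norm_sq_mul_le (hf : MemLp f 2 μ) (hw : ∀ᵐ x ∂μ, ‖w x‖ ≤ M) :
    ∫ x, ‖w x * f x‖ ^ 2 ∂μ ≤ M ^ 2 * ∫ x, ‖f x‖ ^ 2 ∂μ := by
  rw [← integral_const_mul]
  refine integral_mono_of_nonneg (ae_of_all _ fun x => by positivity)
    ((hf.integrable_norm_pow two_ne_zero).const_mul _) ?_
  filter_upwards [hw] with x hx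
  rw [norm_mul, mul_pow]
  gcongr

lemma sq_mul_integral_norm_sq_le (hwf : MemLp (fun x => w x * f x) 2 μ) (hm : 0 ≤ m)
    (hw : ∀ᵐ x ∂μ, m ≤ ‖w x‖) :
    m ^ 2 * ∫ x, ‖f x‖ ^ 2 ∂μ ≤ ∫ x, ‖w x * f x‖ ^ 2 ∂μ := by
  rw [← integral_const_mul]
  refine integral_mono_of_nonneg (ae_of_all _ fun x => by positivity)
    (hwf.integrable_norm_pow two_ne_zero) ?_
  filter_upwards [hw] with x hx
  rw [norm_mul, mul_pow]
  gcongr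

end BoundedWeight

lemma norm_exp_ofReal_mul_mem_Icc {c t : ℝ} (ht : |t| ≤ 1) :
    ‖cexp (c * t)‖ ∈ Icc (Real.exp (-|c|)) (Real.exp |c|) := by
  have hct : |c * t| ≤ |c| := by
    rw [abs_mul]
    exact mul_le_of_le_one_right (abs_nonneg c) ht
  rw [← ofReal_mul, norm_exp_ofReal]
  exact ⟨Real.exp_le_exp.mpr (abs_le.mp hct).1, Real.exp_le_exp.mpr (abs_le.mp hct).2⟩

lemma exp_I_mul_pi_mul_add_I_mul (n : ℤ) (α t : ℝ) :
    cexp (I * ((π * n : ℝ) + α * I) * t)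
      = cexp ((-α : ℝ) * t) * cexp (2 * π * I * n * t / (2 : ℝ)) := by
  rw [← exp_add]
  congr 1
  push_cast
  ring_nf
  rw [I_sq]
  ring

lemma hasSum_sq_norm_integral_mul_fourier {a b : ℝ} (hab : a < b) {g : ℝ → ℂ}
    (hg : MemLp g 2 (volume.restrict (Ioc a b))) :
    HasSum
      (fun n : ℤ => ‖∫ t in Ioc a b, g t * cexp (2 * π * I * n * t / (b - a : ℝ))‖ ^ 2)
      ((b - a) * ∫ t in Ioc a b, ‖g t‖ ^ 2) := by
  have hba : 0 < b - a := sub_pos.mpr hab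
  have hcoeff (n : ℤ) : ∫ t in Ioc a b, g t * cexp (2 * π * I * n * t / (b - a : ℝ))
      = (b - a) • fourierCoeffOn hab g (-n) := by
    rw [fourierCoeffOn_eq_integral, intervalIntegral.integral_of_le hab.le, neg_neg, smul_smul,
      mul_one_div_cancel hba.ne', one_smul]
    simp_rw [fourier_coe_apply, smul_eq_mul, mul_comm (g _)]
  have hparseval := hasSum_sq_fourierCoeffOn hab hg
  rw [intervalIntegral.integral_of_le hab.le, ← (Equiv.neg ℤ).hasSum_iff] at hparseval
  have hvalue : (b - a) * ∫ t in Ioc a b, ‖g t‖ ^ 2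
      = (b - a) ^ 2 * (b - a)⁻¹ • ∫ t in Ioc a b, ‖g t‖ ^ 2 := by
    rw [smul_eq_mul, sq, mul_assoc, mul_inv_cancel_left₀ hba.ne']
  simp_rw [hcoeff, norm_smul, mul_pow, Real.norm_of_nonneg hba.le, hvalue]
  exact hparseval.mul_left _

theorem exp_pi_n_plus_i_alpha_two_sided_general
    (α : ℝ) :
    ∃ c > 0, ∃ C > 0, ∀ f : ℝ → ℂ,
      MemLp f 2 (volume.restrict (Set.Ioo (-1 : ℝ) 1)) →
      Summable (fun n : ℤ =>
        ‖∫ t in Set.Ioo (-1 : ℝ) 1,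
            f t * Complex.exp (Complex.I * ((Real.pi * n : ℝ) + α * Complex.I) * (t : ℂ))‖ ^ 2) ∧
      c * Real.sqrt (∫ t in Set.Ioo (-1 : ℝ) 1, ‖f t‖ ^ 2)
        ≤ Real.sqrt (∑' n : ℤ,
            ‖∫ t in Set.Ioo (-1 : ℝ) 1,
                f t * Complex.exp (Complex.I * ((Real.pi * n : ℝ) + α * Complex.I) * (t : ℂ))‖ ^ 2) ∧
      Real.sqrt (∑' n : ℤ,
          ‖∫ t in Set.Ioo (-1 : ℝ) 1,
              f t * Complex.exp (Complex.I * ((Real.pi * n : ℝ) + α * Complex.I) * (t : ℂ))‖ ^ 2)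
        ≤ C * Real.sqrt (∫ t in Set.Ioo (-1 : ℝ) 1, ‖f t‖ ^ 2) := by
  refine ⟨√2 * Real.exp (-|α|), by positivity, √2 * Real.exp |α|, by positivity, fun f hf => ?_⟩
  rw [Measure.restrict_congr_set Ioo_ae_eq_Ioc] at hf ⊢
  have hweight : ∀ᵐ t : ℝ ∂(volume.restrict (Ioc (-1) 1)),
      ‖cexp ((-α : ℝ) * t)‖ ∈ Icc (Real.exp (-|α|)) (Real.exp |α|) :=
    ae_restrict_of_forall_mem measurableSet_Ioc fun t ht => by
      simpa only [abs_neg] using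
        norm_exp_ofReal_mul_mem_Icc (c := -α) (abs_le.mpr (Ioc_subset_Icc_self ht))
  set g : ℝ → ℂ := fun t => cexp ((-α : ℝ) * t) * f t with hg_def
  have hg : MemLp g 2 (volume.restrict (Ioc (-1) 1)) :=
    hf.mul' (memLp_top_of_bound (by fun_prop) _ (hweight.mono fun _ h => h.2))
  have hcoeff (n : ℤ) (t : ℝ) : g t * cexp (2 * π * I * n * t / (2 : ℝ))
      = f t * cexp (I * ((π * n : ℝ) + α * I) * t) := by
    rw [exp_I_mul_pi_mul_add_I_mul, hg_def]
    ring
  have hsum := hasSum_sq_norm_integral_mul_fourier (by norm_num) hg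
  rw [show (1 : ℝ) - -1 = 2 by norm_num] at hsum
  simp_rw [hcoeff] at hsum
  refine ⟨hsum.summable, ?_, ?_⟩ <;> rw [hsum.tsum_eq]
  · refine mul_sqrt_le_sqrt_of_sq_mul_le (by positivity) ?_
    rw [mul_pow, Real.sq_sqrt zero_le_two, mul_assoc]
    gcongr
    exact sq_mul_integral_norm_sq_le hg (by positivity) (hweight.mono fun _ h => h.1)
  · refine sqrt_le_mul_sqrt_of_le_sq_mul (by positivity) ?_
    rw [mul_pow, Real.sq_sqrt zero_le_two, mul_assoc]
    gcongr
    exact integral_norm_sq_mul_le hf (hweight.mono fun _ h => h.2)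

/-- two-sided (frame / Riesz basis) inequality for the system
`exp(i ν_n t)`, `ν_n = πn + iα` (`n ∈ ℤ`), in `L²(-1,1)`: the `ℓ²` norm of the
generalized Fourier coefficients of `f` is equivalent to `‖f‖_{L²(-1,1)}`. -/
theorem exp_pi_n_plus_i_alpha_two_sided
    (α : ℝ) (hα : 0 < α) :
    ∃ c > 0, ∃ C > 0, ∀ f : ℝ → ℂ,
      MemLp f 2 (volume.restrict (Set.Ioo (-1 : ℝ) 1)) →
      Summable (fun n : ℤ =>
        ‖∫ t in Set.Ioo (-1 : ℝ) 1,
            f t * Complex.exp (Complex.I * ((Real.pi * n : ℝ) + α * Complex.I) * (t : ℂ))‖ ^ 2) ∧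
      c * Real.sqrt (∫ t in Set.Ioo (-1 : ℝ) 1, ‖f t‖ ^ 2)
        ≤ Real.sqrt (∑' n : ℤ,
            ‖∫ t in Set.Ioo (-1 : ℝ) 1,
                f t * Complex.exp (Complex.I * ((Real.pi * n : ℝ) + α * Complex.I) * (t : ℂ))‖ ^ 2) ∧
      Real.sqrt (∑' n : ℤ,
          ‖∫ t in Set.Ioo (-1 : ℝ) 1,
              f t * Complex.exp (Complex.I * ((Real.pi * n : ℝ) + α * Complex.I) * (t : ℂ))‖ ^ 2)
        ≤ C * Real.sqrt (∫ t in Set.Ioo (-1 : ℝ) 1, ‖f t‖ ^ 2) :=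
  exp_pi_n_plus_i_alpha_two_sided_general α
end
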